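/- Let C be a t-dimensional dually AMRD F_q-linear code of n×m matrices with m | t. Then the number of minimum-rank codewords of C equals the number of minimum-rank codewords of C^⊥: A_d(C) = A_{d^⊥}(C^⊥), where d = n - t/m and d^⊥ = t/m. -/

import Mathlib

open Module Matrix

/-- `d` is the minimum rank-metric distance of the set `S` of `n × m` matrices. -/
def MatMinDist {Fq : Type*} [Field Fq] {n m : ℕ}
    (S : Set (Matrix (Fin n) (Fin m) Fq)) (d : ℕ) : Prop :=
  (∃ A ∈ S, A ≠ 0 ∧ A.rank = d) ∧ ∀ A ∈ S, A ≠ 0 → d ≤ A.rank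

/-- The dual of a matrix code with respect to the trace bilinear form
`⟨B, A⟩ = Tr(B Aᵀ)`. -/
def matDual {Fq : Type*} [Field Fq] {n m : ℕ}
    (C : Submodule Fq (Matrix (Fin n) (Fin m) Fq)) : Set (Matrix (Fin n) (Fin m) Fq) :=
  {B | ∀ A ∈ C, Matrix.trace (B * Aᵀ) = 0}
/-- The Gaussian (q-)binomial coefficient `[a choose b]_q`, via the Pascal-type
recurrence `[a+1, b+1]_q = [a, b]_q + q^(b+1) [a, b+1]_q`. -/
def gbinom (q : ℕ) : ℕ → ℕ → ℕ
  | _, 0 => 1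
  | 0, _ + 1 => 0
  | a + 1, b + 1 => gbinom q a b + q ^ (b + 1) * gbinom q a (b + 1)

/-- `rankDist S i = A_i(S)`: the number of elements of `S` of rank `i`. -/
noncomputable def rankDist {Fq : Type*} [Field Fq] {n m : ℕ}
    (S : Set (Matrix (Fin n) (Fin m) Fq)) (i : ℕ) : ℕ :=
  Set.ncard {A | A ∈ S ∧ A.rank = i}

/-! For a subspace `U ≤ K^n` let `V_U` be the space of `n × m` matrices whose columns lie in `U`.
For the trace form `V_U^⊥ = V_{U^⊥}`, so `C^⊥ ∩ V_{U^⊥} = (C + V_U)^⊥` and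
`dim (C ∩ V_U) - dim (C^⊥ ∩ V_{U^⊥}) = t - m (n - dim U)`, which vanishes when `dim U = d`.
A nonzero codeword of minimum rank `d` lies in `V_U` for exactly one `d`-dimensional `U`, namely
its column space, and no other nonzero codeword lies in any such `V_U`. Hence the sum of
`|C ∩ V_U|` over `d`-dimensional `U` is the number of such `U` plus `A_d(C)`; likewise for `C^⊥`
and `d^⊥ = n - d`, and `U ↦ U^⊥` matches the two sums term by term. -/

open Finset

attribute [local instance] Fintype.ofFinite

namespace LinearMap.BilinForm

variable {K V : Type*} [Field K] [AddCommGroup V] [Module K V] {B : LinearMap.BilinForm K V}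

lemma orthogonal_sup (W W' : Submodule K V) :
    B.orthogonal (W ⊔ W') = B.orthogonal W ⊓ B.orthogonal W' := by
  ext x
  simp only [mem_orthogonal_iff, Submodule.mem_inf, Submodule.mem_sup]
  refine ⟨fun h => ⟨fun y hy => h y ⟨y, hy, 0, W'.zero_mem, add_zero y⟩,
    fun z hz => h z ⟨0, W.zero_mem, z, hz, zero_add z⟩⟩, ?_⟩
  rintro ⟨hW, hW'⟩ _ ⟨y, hy, z, hz, rfl⟩
  rw [map_add, LinearMap.add_apply, hW y hy, hW' z hz, add_zero]

variable [FiniteDimensional K V]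

lemma finrank_orthogonal_inf_orthogonal_add (hB : B.Nondegenerate) (W W' : Submodule K V) :
    finrank K (B.orthogonal W ⊓ B.orthogonal W' : Submodule K V) + finrank K W + finrank K W' =
      finrank K V + finrank K (W ⊓ W' : Submodule K V) := by
  have hsup := Submodule.finrank_sup_add_finrank_inf_eq W W'
  have hle := (W ⊔ W').finrank_le
  rw [← orthogonal_sup, finrank_orthogonal hB]
  omega

lemma sum_orthogonal_finrank_eq [Finite V] {M : Type*} [AddCommMonoid M] (hB : B.Nondegenerate)
    (hB₀ : B.IsRefl) {e : ℕ} (he : e ≤ finrank K V) (f : Submodule K V → M) :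
    ∑ U ∈ {U : Submodule K V | finrank K U = e}, f (B.orthogonal U) =
      ∑ W ∈ {W : Submodule K V | finrank K W = finrank K V - e}, f W := by
  refine sum_nbij' B.orthogonal B.orthogonal (fun U hU => ?_) (fun W hW => ?_)
    (fun U _ => orthogonal_orthogonal hB hB₀ U) (fun W _ => orthogonal_orthogonal hB hB₀ W)
    (fun _ _ => rfl)
  · simp only [mem_filter_univ] at hU ⊢
    rw [finrank_orthogonal hB, hU]
  · simp only [mem_filter_univ] at hW ⊢
    rw [finrank_orthogonal hB, hW]
    omega

end LinearMap.BilinForm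

namespace Matrix

variable {K : Type*} [Field K] {ι κ : Type*}

lemma rank_eq_zero_iff [Fintype κ] {A : Matrix ι κ K} : A.rank = 0 ↔ A = 0 := by
  classical
  rw [rank, Submodule.finrank_eq_zero, LinearMap.range_eq_bot, ← toLin'_apply',
    LinearEquiv.map_eq_zero_iff]

def colSubmodule (U : Submodule K (ι → K)) : Submodule K (Matrix ι κ K) where
  carrier := {A | ∀ j, A.col j ∈ U}
  add_mem' hA hB j := U.add_mem (hA j) (hB j)
  zero_mem' _ := U.zero_mem
  smul_mem' c _ hA j := U.smul_mem c (hA j)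

lemma mem_colSubmodule {U : Submodule K (ι → K)} {A : Matrix ι κ K} :
    A ∈ colSubmodule U ↔ ∀ j, A.col j ∈ U := Iff.rfl

def colSubmoduleEquiv (U : Submodule K (ι → K)) : colSubmodule (κ := κ) U ≃ₗ[K] (κ → U) where
  toFun A j := ⟨A.1.col j, A.2 j⟩
  map_add' _ _ := rfl
  map_smul' _ _ := rfl
  invFun f := ⟨(of fun j => (f j : ι → K))ᵀ, fun j => (f j).2⟩
  left_inv _ := rfl
  right_inv _ := rfl

section Fintype

variable [Fintype κ]

lemma mem_colSubmodule_iff_range_le {U : Submodule K (ι → K)} {A : Matrix ι κ K} :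
    A ∈ colSubmodule U ↔ LinearMap.range A.mulVecLin ≤ U := by
  rw [range_mulVecLin, Submodule.span_le, Set.range_subset_iff, mem_colSubmodule]
  rfl

variable [Fintype ι]

lemma mem_colSubmodule_iff_eq_range {U : Submodule K (ι → K)} {A : Matrix ι κ K}
    (hU : finrank K U ≤ A.rank) : A ∈ colSubmodule U ↔ U = LinearMap.range A.mulVecLin := by
  rw [mem_colSubmodule_iff_range_le]
  exact ⟨fun h => (Submodule.eq_of_le_of_finrank_le h hU).symm, fun h => h.ge⟩

lemma finrank_colSubmodule (U : Submodule K (ι → K)) :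
    finrank K (colSubmodule (κ := κ) U) = Fintype.card κ * finrank K U := by
  rw [(colSubmoduleEquiv U).finrank_eq, finrank_pi_fintype, sum_const, smul_eq_mul, card_univ]

lemma dotProductBilin_isSymm :
    LinearMap.BilinForm.IsSymm (dotProductBilin K K : LinearMap.BilinForm K (ι → K)) :=
  ⟨dotProduct_comm⟩

lemma dotProductBilin_nondegenerate :
    LinearMap.BilinForm.Nondegenerate (dotProductBilin K K : LinearMap.BilinForm K (ι → K)) :=
  (LinearMap.IsRefl.nondegenerate_iff_separatingLeft
    (B := (dotProductBilin K K : LinearMap.BilinForm K (ι → K))) dotProductBilin_isSymm.isRefl).mpr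
    dotProduct_eq_zero

variable (K ι κ) in
def traceForm : LinearMap.BilinForm K (Matrix ι κ K) :=
  LinearMap.mk₂ K (fun X Y => trace (X * Yᵀ))
    (fun X X' Y => by rw [Matrix.add_mul, trace_add])
    (fun c X Y => by rw [Matrix.smul_mul, trace_smul])
    (fun X Y Y' => by rw [transpose_add, Matrix.mul_add, trace_add])
    (fun c X Y => by rw [transpose_smul, Matrix.mul_smul, trace_smul])

@[simp] lemma traceForm_apply (X Y : Matrix ι κ K) : traceForm K ι κ X Y = trace (X * Yᵀ) := rfl

lemma traceForm_isSymm : (traceForm K ι κ).IsSymm :=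
  ⟨fun X Y => by rw [traceForm_apply, traceForm_apply, ← trace_transpose, transpose_mul,
    transpose_transpose]⟩

lemma traceForm_nondegenerate : (traceForm K ι κ).Nondegenerate :=
  (LinearMap.IsRefl.nondegenerate_iff_separatingLeft (B := traceForm K ι κ)
    traceForm_isSymm.isRefl).mpr fun X hX =>
      ext_iff_trace_mul_right.mpr fun Z => by simpa using hX Zᵀ

lemma trace_mul_transpose_eq_sum_dotProduct_col (X Y : Matrix ι κ K) :
    trace (X * Yᵀ) = ∑ j, X.col j ⬝ᵥ Y.col j := by
  simp only [trace, diag, mul_apply, transpose_apply, dotProduct, col]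
  exact sum_comm

lemma orthogonal_colSubmodule (U : Submodule K (ι → K)) :
    (traceForm K ι κ).orthogonal (colSubmodule U) =
      colSubmodule (LinearMap.BilinForm.orthogonal (dotProductBilin K K) U) := by
  classical
  ext B
  simp only [LinearMap.BilinForm.mem_orthogonal_iff, traceForm_apply,
    trace_mul_transpose_eq_sum_dotProduct_col, mem_colSubmodule]
  constructor
  · intro hB j u hu
    let X : Matrix ι κ K := (of (Pi.single j u))ᵀ
    have hcol : ∀ j', X.col j' = (Pi.single j u : κ → ι → K) j' := fun _ => rfl
    have hX := hB X fun j' => by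
      rw [hcol]
      rcases eq_or_ne j' j with rfl | hj'
      · rwa [Pi.single_eq_same]
      · rw [Pi.single_eq_of_ne hj']
        exact U.zero_mem
    rwa [Fintype.sum_eq_single j fun j' hj' => by
      rw [hcol, Pi.single_eq_of_ne hj', zero_dotProduct], hcol, Pi.single_eq_same] at hX
  · intro hB A hA
    exact sum_eq_zero fun j _ => hB j _ (hA j)

lemma card_inf_colSubmodule_eq_card_orthogonal_inf (C : Submodule K (Matrix ι κ K))
    (U : Submodule K (ι → K))
    (h : finrank K C + Fintype.card κ * finrank K U = Fintype.card ι * Fintype.card κ) :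
    Nat.card (C ⊓ colSubmodule U : Submodule K (Matrix ι κ K)) =
      Nat.card ((traceForm K ι κ).orthogonal C ⊓
        colSubmodule (LinearMap.BilinForm.orthogonal (dotProductBilin K K) U) :
          Submodule K (Matrix ι κ K)) := by
  have key := LinearMap.BilinForm.finrank_orthogonal_inf_orthogonal_add traceForm_nondegenerate C
    (colSubmodule U)
  rw [orthogonal_colSubmodule, finrank_colSubmodule, finrank_matrix, Module.finrank_self,
    mul_one] at key
  exact Nat.card_congr (LinearEquiv.ofFinrankEq (R := K) _ _ (by omega)).toEquiv

variable [Fintype K]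

open Classical in
lemma card_finrank_eq_and_mem_colSubmodule {A : Matrix ι κ K} {e : ℕ} (hA : e ≤ A.rank) :
    #{U : Submodule K (ι → K) | finrank K U = e ∧ A ∈ colSubmodule U} =
      if A.rank = e then 1 else 0 := by
  have hiff : ∀ U : Submodule K (ι → K), finrank K U = e ∧ A ∈ colSubmodule U ↔
      U = LinearMap.range A.mulVecLin ∧ A.rank = e := by
    refine fun U => ⟨?_, ?_⟩
    · rintro ⟨rfl, hU⟩
      obtain rfl := (mem_colSubmodule_iff_eq_range hA).mp hU
      exact ⟨rfl, rfl⟩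
    · rintro ⟨rfl, hr⟩
      exact ⟨hr, mem_colSubmodule_iff_range_le.mpr le_rfl⟩
  simp only [hiff]
  split_ifs with hr <;> simp [hr, filter_eq']

lemma sum_card_inf_colSubmodule (D : Submodule K (Matrix ι κ K)) {e : ℕ} (he : e ≠ 0)
    (hD : ∀ A ∈ D, A ≠ 0 → e ≤ A.rank) :
    ∑ U ∈ {U : Submodule K (ι → K) | finrank K U = e},
        Nat.card (D ⊓ colSubmodule U : Submodule K (Matrix ι κ K)) =
      #{U : Submodule K (ι → K) | finrank K U = e} + {A | A ∈ D ∧ A.rank = e}.ncard := by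
  classical
  set G : Finset (Submodule K (ι → K)) := {U | finrank K U = e}
  set T : Finset (Matrix ι κ K) := {A | A ∈ D}
  have hcard : ∀ U, Nat.card (D ⊓ colSubmodule U : Submodule K (Matrix ι κ K)) =
      #(T.bipartiteAbove (fun U A => A ∈ colSubmodule U) U) := by
    intro U
    rw [Nat.card_eq_fintype_card, Fintype.card_subtype, bipartiteAbove, filter_filter]
    simp only [Submodule.mem_inf]
  have hcount : ∀ A ∈ T, #(G.bipartiteBelow (fun U A => A ∈ colSubmodule U) A) =
      (if A = 0 then #G else 0) + if A.rank = e then 1 else 0 := by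
    intro A hA
    rw [bipartiteBelow, filter_filter]
    rcases eq_or_ne A 0 with rfl | hA0
    · simp [G, rank_zero, he.symm, (colSubmodule _).zero_mem]
    · rw [if_neg hA0, zero_add,
        ← card_finrank_eq_and_mem_colSubmodule (hD A (by simpa [T] using hA) hA0)]
  rw [sum_congr rfl fun U _ => hcard U, sum_card_bipartiteAbove_eq_sum_card_bipartiteBelow,
    sum_congr rfl hcount, sum_add_distrib, sum_ite_eq', if_pos (by simp [T]), sum_boole,
    Set.ncard_eq_toFinset_card']
  simp [T, filter_filter]

lemma card_finrank_eq_card_finrank_of_add_eq {e e' : ℕ} (he : e + e' = Fintype.card ι) :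
    #{U : Submodule K (ι → K) | finrank K U = e} =
      #{W : Submodule K (ι → K) | finrank K W = e'} := by
  rw [card_eq_sum_ones, card_eq_sum_ones, show e' = finrank K (ι → K) - e by
    rw [finrank_fintype_fun_eq_card]; omega]
  exact LinearMap.BilinForm.sum_orthogonal_finrank_eq
    (B := (dotProductBilin K K : LinearMap.BilinForm K (ι → K))) dotProductBilin_nondegenerate
    dotProductBilin_isSymm.isRefl (by rw [finrank_fintype_fun_eq_card]; omega) fun _ => 1

lemma sum_card_inf_colSubmodule_eq_sum_card_orthogonal_inf (C : Submodule K (Matrix ι κ K))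
    {e e' : ℕ} (he : e + e' = Fintype.card ι) (hC : finrank K C = Fintype.card κ * e') :
    ∑ U ∈ {U : Submodule K (ι → K) | finrank K U = e},
        Nat.card (C ⊓ colSubmodule U : Submodule K (Matrix ι κ K)) =
      ∑ W ∈ {W : Submodule K (ι → K) | finrank K W = e'},
        Nat.card ((traceForm K ι κ).orthogonal C ⊓ colSubmodule W :
          Submodule K (Matrix ι κ K)) := by
  rw [show e' = finrank K (ι → K) - e by rw [finrank_fintype_fun_eq_card]; omega,
    ← LinearMap.BilinForm.sum_orthogonal_finrank_eq dotProductBilin_nondegenerate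
      dotProductBilin_isSymm.isRefl (by rw [finrank_fintype_fun_eq_card]; omega)]
  refine sum_congr rfl fun U hU => card_inf_colSubmodule_eq_card_orthogonal_inf C U ?_
  rw [(mem_filter.mp hU).2, hC, ← he]
  ring

end Fintype

lemma _root_.MatMinDist.ne_zero {n m : ℕ} {S : Set (Matrix (Fin n) (Fin m) K)} {d : ℕ}
    (h : MatMinDist S d) : d ≠ 0 := by
  obtain ⟨A, -, hA0, rfl⟩ := h.1
  exact mt rank_eq_zero_iff.mp hA0

lemma matDual_eq_orthogonal {n m : ℕ} (C : Submodule K (Matrix (Fin n) (Fin m) K)) :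
    matDual C = (traceForm K (Fin n) (Fin m)).orthogonal C := by
  ext B
  exact forall₂_congr fun A _ => by rw [← traceForm_apply, traceForm_isSymm.eq B A]

end Matrix

theorem dually_AMRD_min_weight_count_general
    (Fq : Type*) [Field Fq] [Fintype Fq]
    (n m t d dp : ℕ) (hmt : m ∣ t)
    (C : Submodule Fq (Matrix (Fin n) (Fin m) Fq))
    (ht : finrank Fq C = t)
    (hd : MatMinDist (C : Set (Matrix (Fin n) (Fin m) Fq)) d)
    (hdp : MatMinDist (matDual C) dp)
    (hA : d + t / m = n) (hAp : dp = t / m) :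
    rankDist (C : Set (Matrix (Fin n) (Fin m) Fq)) d = rankDist (matDual C) dp := by
  rw [matDual_eq_orthogonal] at hdp ⊢
  have hdim : d + dp = Fintype.card (Fin n) := by rw [Fintype.card_fin]; omega
  have key := sum_card_inf_colSubmodule_eq_sum_card_orthogonal_inf C hdim
    (by rw [ht, Fintype.card_fin, hAp, Nat.mul_div_cancel' hmt])
  rw [sum_card_inf_colSubmodule C hd.ne_zero hd.2, sum_card_inf_colSubmodule _ hdp.ne_zero hdp.2,
    card_finrank_eq_card_finrank_of_add_eq hdim] at key
  exact Nat.add_left_cancel key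

/-- For a dually AMRD code `C` with `m ∣ t` (so `d = n - t/m`, `d^⊥ = t/m`), the
number of minimum-rank codewords of `C` equals that of `C^⊥`:
`A_d(C) = A_{d^⊥}(C^⊥)`. -/
theorem dually_AMRD_min_weight_count
    (Fq : Type*) [Field Fq] [Fintype Fq]
    (n m t d dp : ℕ) (hnm : n ≤ m) (hmt : m ∣ t)
    (C : Submodule Fq (Matrix (Fin n) (Fin m) Fq)) (hC0 : C ≠ ⊥) (hC1 : C ≠ ⊤)
    (ht : finrank Fq C = t)
    (hd : MatMinDist (C : Set (Matrix (Fin n) (Fin m) Fq)) d)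
    (hdp : MatMinDist (matDual C) dp)
    (hA : d + t / m = n) (hAp : dp = t / m) :
    rankDist (C : Set (Matrix (Fin n) (Fin m) Fq)) d = rankDist (matDual C) dp :=
  dually_AMRD_min_weight_count_general Fq n m t d dp hmt C ht hd hdp hA hAp
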